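/- If R and T are distinct (1,β)-BM relations, then ψ_β(R) and ψ_β(T) are disjoint sets of (1,β+1)-BM relations. -/

import Mathlib

open Set

/-- Signed letters: letter index together with a sign (`true` = positive). -/
abbrev V (n : ℕ) := Fin n × Bool

/-- Formal inversion of a signed letter. -/
def iv {n : ℕ} (x : V n) : V n := (x.1, !x.2)

/-- Oriented squares: tuples (a, b, a', b'). -/
abbrev Tup (α β : ℕ) := V α × V β × V α × V β

/-- The geometric square [aba'b'], as the set of its four representatives. -/
def square {α β : ℕ} (a : V α) (b : V β) (a' : V α) (b' : V β) : Set (Tup α β) :=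
  {(a, b, a', b'), (a', b', a, b), (iv a, iv b', iv a', iv b), (iv a', iv b, iv a, iv b')}

/-- The link of a set of geometric squares: the set of (horizontal, vertical)
edges contributed by the corners of the squares. -/
def link {α β : ℕ} (R : Set (Set (Tup α β))) : Set (V α × V β) :=
  {e | ∃ q ∈ R, ∃ t ∈ q, e = (iv t.1, t.2.1)}

/-- An (α,β)-BM relation: a set of α·β geometric squares whose link is the
complete bipartite graph K_{2α,2β}. -/
def IsBM (α β : ℕ) (R : Set (Set (Tup α β))) : Prop :=
  (∀ q ∈ R, ∃ a b a' b', q = square a b a' b') ∧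
  R.ncard = α * β ∧ link R = Set.univ

/-- Embedding of old vertical letters into the enlarged alphabet. -/
def up {β : ℕ} (b : V β) : V (β + 1) := (b.1.castSucc, b.2)

/-- The new vertical letter b_{β+1}. -/
def bn (β : ℕ) : V (β + 1) := (Fin.last β, true)

/-- Embedding of tuples along `up`. -/
def upT {α β : ℕ} (t : Tup α β) : Tup α (β + 1) :=
  (t.1, up t.2.1, t.2.2.1, up t.2.2.2)

/-- Embedding of a geometric square into the enlarged alphabet. -/
def upSq {α β : ℕ} (q : Set (Tup α β)) : Set (Tup α (β + 1)) := upT '' q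

/-- Embedding of a set of geometric squares into the enlarged alphabet. -/
def upR {α β : ℕ} (R : Set (Set (Tup α β))) : Set (Set (Tup α (β + 1))) := upSq '' R

/-- The generator a₁. -/
def a1 : V 1 := (0, true)

/-- ψ_β^{(1)}: adjoin one of the three squares involving only b_{β+1}. -/
def psi1 (β : ℕ) (R : Set (Set (Tup 1 β))) : Set (Set (Set (Tup 1 (β + 1)))) :=
  (fun s => upR R ∪ {s}) ''
    {square a1 (bn β) (iv a1) (iv (bn β)),
     square a1 (bn β) a1 (iv (bn β)),
     square a1 (bn β) (iv a1) (bn β)}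

/-- ψ_β^{(2)}: replace one square [aba'b'] of R by one of the two pairs
{[a b_{β+1} a' b'], [a b a' b_{β+1}⁻¹]} or {[a b_{β+1}⁻¹ a' b'], [a b a' b_{β+1}]}. -/
def psi2 (β : ℕ) (R : Set (Set (Tup 1 β))) : Set (Set (Set (Tup 1 (β + 1)))) :=
  {U | ∃ a b a' b', square a b a' b' ∈ R ∧
    (U = upR (R \ {square a b a' b'}) ∪
        {square a (bn β) a' (up b'), square a (up b) a' (iv (bn β))} ∨
     U = upR (R \ {square a b a' b'}) ∪
        {square a (iv (bn β)) a' (up b'), square a (up b) a' (bn β)})}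

/-- The map ψ_β. -/
def psi (β : ℕ) (R : Set (Set (Tup 1 β))) : Set (Set (Set (Tup 1 (β + 1)))) :=
  psi1 β R ∪ psi2 β R

/-!
The squares of a relation in ψ_β(R) that avoid b_{β+1} are the images of the squares of R
that were kept, and the others are the adjoined square or the new pair. A new pair
{[a b_{β+1} a' b'], [a b a' b_{β+1}⁻¹]} determines the square [a b a' b'] it replaced (up to
the symmetries of geometric squares), so every relation in ψ_β(R) gives R back.

For the BM property, the kept squares supply the link edges at old letters, except those of
the replaced square [a b a' b'], which are supplied again by the new pair; the new squares
supply the four edges at b_{β+1}^{±1}. Since the new squares are not images of old ones,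
the number of squares grows by exactly one.
-/

@[simp] lemma iv_iv {n : ℕ} (x : V n) : iv (iv x) = x := by simp [iv]

lemma iv_ne_self {n : ℕ} (x : V n) : iv x ≠ x := by simp [iv, Prod.ext_iff]

lemma up_iv {β : ℕ} (b : V β) : up (iv b) = iv (up b) := rfl

lemma up_injective {β : ℕ} : Function.Injective (up (β := β)) := by
  intro x y h
  simpa [up, Prod.ext_iff] using h

lemma up_ne_of_fst_eq_last {β : ℕ} (b : V β) {y : V (β + 1)} (hy : y.1 = Fin.last β) :
    up b ≠ y := by
  simp [up, Prod.ext_iff, hy, Fin.castSucc_ne_last]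

lemma eq_or_eq_iv (x a : V 1) : x = a ∨ x = iv a := by
  obtain ⟨i, s⟩ := x
  obtain ⟨j, t⟩ := a
  obtain rfl : i = j := Subsingleton.elim _ _
  cases s <;> cases t <;> simp [iv]

section Squares

variable {α β : ℕ}

lemma square_comm (a : V α) (b : V β) (a' : V α) (b' : V β) :
    square a b a' b' = square a' b' a b := by
  ext; simp only [square, mem_insert_iff, mem_singleton_iff]; tauto

lemma square_iv_left (a : V α) (b : V β) (a' : V α) (b' : V β) :
    square (iv a) (iv b') (iv a') (iv b) = square a b a' b' := by
  ext; simp only [square, mem_insert_iff, mem_singleton_iff, iv_iv]; tauto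

lemma square_iv_right (a : V α) (b : V β) (a' : V α) (b' : V β) :
    square (iv a') (iv b) (iv a) (iv b') = square a b a' b' := by
  ext; simp only [square, mem_insert_iff, mem_singleton_iff, iv_iv]; tauto

lemma mem_square (a : V α) (b : V β) (a' : V α) (b' : V β) :
    (a, b, a', b') ∈ square a b a' b' := by simp [square]

lemma square_eq_square_iff {a c a' c' : V α} {b d b' d' : V β} :
    square a b a' b' = square c d c' d' ↔ (a, b, a', b') ∈ square c d c' d' := by
  refine ⟨fun h => h ▸ mem_square a b a' b', fun h => ?_⟩
  simp only [square, mem_insert_iff, mem_singleton_iff, Prod.mk.injEq] at h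
  rcases h with ⟨rfl, rfl, rfl, rfl⟩ | ⟨rfl, rfl, rfl, rfl⟩ | ⟨rfl, rfl, rfl, rfl⟩ |
    ⟨rfl, rfl, rfl, rfl⟩
  exacts [rfl, square_comm .., square_iv_left .., square_iv_right ..]

lemma square_bn_eq_square_bn_iff {a c a' c' : V α} {b' d' : V β} :
    square a (bn β) a' (up b') = square c (bn β) c' (up d') ↔ a = c ∧ a' = c' ∧ b' = d' := by
  rw [square_eq_square_iff]
  simp [square, bn, up, iv, Prod.ext_iff, Fin.castSucc_ne_last]

lemma square_iv_bn_eq_square_iv_bn_iff {a c a' c' : V α} {b d : V β} :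
    square a (up b) a' (iv (bn β)) = square c (up d) c' (iv (bn β)) ↔
      a = c ∧ b = d ∧ a' = c' := by
  rw [square_eq_square_iff]
  simp [square, bn, up, iv, Prod.ext_iff, Fin.castSucc_ne_last]

lemma square_bn_eq_square_iv_bn_iff {a c a' c' : V α} {b' d : V β} :
    square a (bn β) a' (up b') = square c (up d) c' (iv (bn β)) ↔
      a = iv c ∧ a' = iv c' ∧ b' = iv d := by
  rw [square_eq_square_iff]
  simp [square, bn, up, iv, Prod.ext_iff, Fin.castSucc_ne_last]

end Squares

section Embedding

variable {α β : ℕ}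

lemma upT_injective : Function.Injective (upT (α := α) (β := β)) := by
  rintro ⟨x₁, x₂, x₃, x₄⟩ ⟨y₁, y₂, y₃, y₄⟩ h
  simp only [upT, Prod.mk.injEq, up_injective.eq_iff] at h
  simp only [h]

lemma upSq_injective : Function.Injective (upSq (α := α) (β := β)) :=
  image_injective.mpr upT_injective

lemma upR_injective : Function.Injective (upR (α := α) (β := β)) :=
  image_injective.mpr upSq_injective

lemma upSq_square (a : V α) (b : V β) (a' : V α) (b' : V β) :
    upSq (square a b a' b') = square a (up b) a' (up b') := by
  simp only [upSq, square, image_insert_eq, image_singleton, upT, up_iv]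

lemma exists_square_of_mem_upR {R : Set (Set (Tup α β))}
    (hR : ∀ q ∈ R, ∃ a b a' b', q = square a b a' b') :
    ∀ q ∈ upR R, ∃ a b a' b', q = square a b a' b' := by
  rintro _ ⟨q, hq, rfl⟩
  obtain ⟨a, b, a', b', rfl⟩ := hR q hq
  exact ⟨a, up b, a', up b', upSq_square a b a' b'⟩

lemma square_notMem_range_upSq {a a' : V α} {b : V (β + 1)} (b' : V (β + 1))
    (hb : b.1 = Fin.last β) : square a b a' b' ∉ range upSq := by
  rintro ⟨q, hq⟩
  obtain ⟨t, -, ht⟩ : (a, b, a', b') ∈ upSq q := hq ▸ mem_square a b a' b'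
  exact up_ne_of_fst_eq_last t.2.1 hb (congrArg (·.2.1) ht)

lemma disjoint_singleton_square_bn_range (a a' : V α) (b' : V (β + 1)) :
    Disjoint {square a (bn β) a' b'} (range upSq) :=
  disjoint_singleton_left.mpr (square_notMem_range_upSq _ rfl)

lemma upR_subset_range (X : Set (Set (Tup α β))) : upR X ⊆ range upSq :=
  image_subset_range _ _

lemma upR_union_inter_range {X : Set (Set (Tup α β))} {N : Set (Set (Tup α (β + 1)))}
    (hN : Disjoint N (range upSq)) : (upR X ∪ N) ∩ range upSq = upR X := by
  rw [union_inter_distrib_right, inter_eq_left.mpr (upR_subset_range X),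
    hN.inter_eq, union_empty]

lemma upR_union_diff_range {X : Set (Set (Tup α β))} {N : Set (Set (Tup α (β + 1)))}
    (hN : Disjoint N (range upSq)) : (upR X ∪ N) \ range upSq = N := by
  rw [union_sdiff_distrib, sdiff_eq_empty.mpr (upR_subset_range X), empty_union,
    hN.sdiff_eq_left]

lemma upR_union_eq_upR_union_iff {X X' : Set (Set (Tup α β))}
    {N N' : Set (Set (Tup α (β + 1)))} (hN : Disjoint N (range upSq))
    (hN' : Disjoint N' (range upSq)) : upR X ∪ N = upR X' ∪ N' ↔ X = X' ∧ N = N' := by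
  refine ⟨fun h => ⟨upR_injective ?_, ?_⟩, by rintro ⟨rfl, rfl⟩; rfl⟩
  · rw [← upR_union_inter_range hN, h, upR_union_inter_range hN']
  · rw [← upR_union_diff_range hN, h, upR_union_diff_range hN']

lemma ncard_upR_union {X : Set (Set (Tup α β))} {N : Set (Set (Tup α (β + 1)))}
    (hN : Disjoint N (range upSq)) : (upR X ∪ N).ncard = X.ncard + N.ncard := by
  rw [ncard_union_eq (hN.symm.mono_left (upR_subset_range X)),
    upR, ncard_image_of_injective _ upSq_injective]

end Embedding

section NewPair

variable {α β : ℕ}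

def newPair (a : V α) (b : V β) (a' : V α) (b' : V β) : Set (Set (Tup α (β + 1))) :=
  {square a (bn β) a' (up b'), square a (up b) a' (iv (bn β))}

lemma newPair_eq_newPair_iv (a : V α) (b : V β) (a' : V α) (b' : V β) :
    newPair (iv a') (iv b) (iv a) (iv b') =
      {square a (iv (bn β)) a' (up b'), square a (up b) a' (bn β)} := by
  rw [newPair, ← square_iv_right a (iv (bn β)) a' (up b'), ← square_iv_right a (up b) a' (bn β)]
  rfl

lemma square_eq_of_newPair_eq {a c a' c' : V α} {b d b' d' : V β}
    (h : newPair a b a' b' = newPair c d c' d') : square a b a' b' = square c d c' d' := by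
  rcases pair_eq_pair_iff.mp h with ⟨h₁, h₂⟩ | ⟨h₁, h₂⟩
  · obtain ⟨rfl, rfl, rfl⟩ := square_bn_eq_square_bn_iff.mp h₁
    obtain ⟨-, rfl, -⟩ := square_iv_bn_eq_square_iv_bn_iff.mp h₂
    rfl
  · obtain ⟨rfl, rfl, rfl⟩ := square_bn_eq_square_iv_bn_iff.mp h₁
    obtain ⟨-, -, rfl⟩ := square_bn_eq_square_iv_bn_iff.mp h₂.symm
    simpa using square_iv_left c d c' (iv b)

lemma ncard_newPair (a : V α) (b : V β) (a' : V α) (b' : V β) :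
    (newPair a b a' b').ncard = 2 :=
  ncard_pair fun h => iv_ne_self a (square_bn_eq_square_iv_bn_iff.mp h).1.symm

lemma disjoint_newPair_range (a : V α) (b : V β) (a' : V α) (b' : V β) :
    Disjoint (newPair a b a' b') (range upSq) := by
  rw [newPair, disjoint_insert_left, disjoint_singleton_left, square_comm a (up b)]
  exact ⟨square_notMem_range_upSq _ rfl, square_notMem_range_upSq _ rfl⟩

end NewPair

section Link

variable {α β : ℕ}

def cornerEdge (t : Tup α β) : V α × V β := (iv t.1, t.2.1)

lemma link_eq_biUnion (R : Set (Set (Tup α β))) : link R = ⋃ q ∈ R, cornerEdge '' q := by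
  ext e
  simp only [link, mem_ofPred_eq, mem_iUnion₂, mem_image, cornerEdge, exists_prop, eq_comm]

lemma link_union (A B : Set (Set (Tup α β))) : link (A ∪ B) = link A ∪ link B := by
  simp only [link_eq_biUnion, biUnion_union]

lemma link_singleton_square (a : V α) (b : V β) (a' : V α) (b' : V β) :
    link {square a b a' b'} = {(iv a, b), (iv a', b'), (a, iv b'), (a', iv b)} := by
  simp only [link_eq_biUnion, biUnion_singleton, square, image_insert_eq, image_singleton,
    cornerEdge, iv_iv]

lemma link_upR (X : Set (Set (Tup α β))) : link (upR X) = Prod.map id up '' link X := by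
  simp only [link_eq_biUnion, upR, upSq, biUnion_image, image_iUnion₂, image_image]
  rfl

lemma link_newPair (a : V α) (b : V β) (a' : V α) (b' : V β) :
    link (newPair a b a' b') = Prod.map id up '' link {square a b a' b'} ∪
      {(iv a, bn β), (a, bn β), (a', iv (bn β)), (iv a', iv (bn β))} := by
  rw [newPair, insert_eq, link_union, link_singleton_square, link_singleton_square,
    link_singleton_square]
  ext e
  simp only [image_insert_eq, image_singleton, Prod.map, id, up_iv, iv_iv, mem_union,
    mem_insert_iff, mem_singleton_iff]
  tauto

end Link

section Psi

variable {β : ℕ} {R T : Set (Set (Tup 1 β))} {U : Set (Set (Tup 1 (β + 1)))}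

lemma exists_of_mem_psi1 (h : U ∈ psi1 β R) :
    ∃ a' b', U = upR R ∪ {square a1 (bn β) a' b'} ∧
      {(iv a1, bn β), (a1, bn β), (a1, iv (bn β)), (iv a1, iv (bn β))} ⊆
        link {square a1 (bn β) a' b'} := by
  obtain ⟨s, hs, rfl⟩ := h
  rcases hs with rfl | rfl | rfl <;>
    exact ⟨_, _, rfl, by simp [link_singleton_square, insert_subset_iff]⟩

/-- The second kind of replacement is the first one performed on the representative
[a'⁻¹ b⁻¹ a⁻¹ b'⁻¹] of the same square. -/
lemma mem_psi2_iff :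
    U ∈ psi2 β R ↔ ∃ a b a' b', square a b a' b' ∈ R ∧
      U = upR (R \ {square a b a' b'}) ∪ newPair a b a' b' := by
  refine ⟨?_, fun ⟨a, b, a', b', hq, hU⟩ => ⟨a, b, a', b', hq, Or.inl hU⟩⟩
  rintro ⟨a, b, a', b', hq, hU | hU⟩
  · exact ⟨a, b, a', b', hq, hU⟩
  · refine ⟨iv a', iv b, iv a, iv b', ?_⟩
    rw [square_iv_right, newPair_eq_newPair_iv]
    exact ⟨hq, hU⟩

lemma eq_of_mem_psi1_of_mem_psi1 (hR : U ∈ psi1 β R) (hT : U ∈ psi1 β T) : R = T := by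
  obtain ⟨a', b', rfl, -⟩ := exists_of_mem_psi1 hR
  obtain ⟨c', d', hU, -⟩ := exists_of_mem_psi1 hT
  exact ((upR_union_eq_upR_union_iff (disjoint_singleton_square_bn_range _ _ _)
    (disjoint_singleton_square_bn_range _ _ _)).mp hU).1

lemma notMem_psi2_of_mem_psi1 (hR : U ∈ psi1 β R) : U ∉ psi2 β T := by
  obtain ⟨c', d', rfl, -⟩ := exists_of_mem_psi1 hR
  intro hT
  obtain ⟨a, b, a', b', -, hU⟩ := mem_psi2_iff.mp hT
  have hN := ((upR_union_eq_upR_union_iff (disjoint_singleton_square_bn_range _ _ _)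
    (disjoint_newPair_range a b a' b')).mp hU).2
  simpa [ncard_newPair] using congrArg ncard hN

lemma eq_of_mem_psi2_of_mem_psi2 (hR : U ∈ psi2 β R) (hT : U ∈ psi2 β T) : R = T := by
  obtain ⟨a, b, a', b', hq, rfl⟩ := mem_psi2_iff.mp hR
  obtain ⟨c, d, c', d', hq', hU⟩ := mem_psi2_iff.mp hT
  obtain ⟨hX, hN⟩ := (upR_union_eq_upR_union_iff (disjoint_newPair_range a b a' b')
    (disjoint_newPair_range c d c' d')).mp hU
  rw [← insert_sdiff_self_of_mem hq, ← insert_sdiff_self_of_mem hq', hX,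
    square_eq_of_newPair_eq hN]

lemma psi_inter_psi_eq_empty (h : R ≠ T) : psi β R ∩ psi β T = ∅ := by
  refine eq_empty_of_forall_notMem fun U ⟨hR, hT⟩ => h ?_
  rcases hR with hR | hR <;> rcases hT with hT | hT
  · exact eq_of_mem_psi1_of_mem_psi1 hR hT
  · exact absurd hT (notMem_psi2_of_mem_psi1 hR)
  · exact absurd hR (notMem_psi2_of_mem_psi1 hT)
  · exact eq_of_mem_psi2_of_mem_psi2 hR hT


lemma image_up_union_eq_univ {E : Set (V 1 × V (β + 1))} {a a' : V 1}
    (hE : {(iv a, bn β), (a, bn β), (a', iv (bn β)), (iv a', iv (bn β))} ⊆ E) :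
    Prod.map id up '' univ ∪ E = univ := by
  simp only [insert_subset_iff, singleton_subset_iff] at hE
  refine eq_univ_of_forall fun ⟨x, i, s⟩ => ?_
  induction i using Fin.lastCases with
  | last =>
    right
    cases s
    · rcases eq_or_eq_iv x a' with rfl | rfl
      exacts [hE.2.2.1, hE.2.2.2]
    · rcases eq_or_eq_iv x a with rfl | rfl
      exacts [hE.2.1, hE.1]
  | cast j => exact Or.inl ⟨(x, j, s), trivial, rfl⟩

lemma isBM_of_mem_psi1 (hR : IsBM 1 β R) (h : U ∈ psi1 β R) : IsBM 1 (β + 1) U := by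
  obtain ⟨a', b', rfl, hlink⟩ := exists_of_mem_psi1 h
  refine ⟨?_, ?_, ?_⟩
  · rintro q (hq | rfl)
    exacts [exists_square_of_mem_upR hR.1 q hq, ⟨_, _, _, _, rfl⟩]
  · rw [ncard_upR_union (disjoint_singleton_square_bn_range _ _ _),
      ncard_singleton, hR.2.1]
    ring
  · rw [link_union, link_upR, hR.2.2]
    exact image_up_union_eq_univ hlink

lemma isBM_of_mem_psi2 (hR : IsBM 1 β R) (h : U ∈ psi2 β R) : IsBM 1 (β + 1) U := by
  obtain ⟨a, b, a', b', hq, rfl⟩ := mem_psi2_iff.mp h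
  refine ⟨?_, ?_, ?_⟩
  · rintro q (hq | hq)
    · exact exists_square_of_mem_upR (fun q hq => hR.1 q hq.1) q hq
    · rcases hq with rfl | rfl <;> exact ⟨_, _, _, _, rfl⟩
  · rw [ncard_upR_union (disjoint_newPair_range a b a' b'), ncard_newPair]
    linarith [ncard_sdiff_singleton_add_one hq, hR.2.1]
  · rw [link_union, link_upR, link_newPair, ← union_assoc, ← image_union, ← link_union,
      sdiff_union_of_subset (singleton_subset_iff.mpr hq), hR.2.2]
    exact image_up_union_eq_univ Subset.rfl

end Psi

/-- Distinct (1,β)-BM relations give disjoint families ψ_β(R), ψ_β(T) of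
(1,β+1)-BM relations. -/
theorem psi_disjoint {β : ℕ} (R T : Set (Set (Tup 1 β)))
    (hR : IsBM 1 β R) (hT : IsBM 1 β T) (hne : R ≠ T) :
    psi β R ∩ psi β T = ∅ ∧
    (∀ U ∈ psi β R ∪ psi β T, IsBM 1 (β + 1) U) := by
  refine ⟨psi_inter_psi_eq_empty hne, ?_⟩
  rintro U ((hU | hU) | (hU | hU))
  exacts [isBM_of_mem_psi1 hR hU, isBM_of_mem_psi2 hR hU, isBM_of_mem_psi1 hT hU,
    isBM_of_mem_psi2 hT hU]
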